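/- arXiv:2103.07913 — 4 statements merged into one kernel-verified Lean document; each statement's English description precedes it below -/
import Mathlib

section
/- Let κ be an infinite cardinal. Every κ-regular graph has a decomposition of its edge set into perfect matchings (equivalently, a 1-factorization). -/
open Cardinal

universe u

/-- `G` is `κ`-regular: every vertex has degree (neighbourhood cardinality) exactly `κ`. -/
def SimpleGraph.CardRegular {V : Type u} (G : SimpleGraph V) (κ : Cardinal.{u}) : Prop :=
  ∀ v : V, #(G.neighborSet v) = κ

/-- `G` has no isolated vertices. -/
def SimpleGraph.NoIsolatedVerts {V : Type u} (G : SimpleGraph V) : Prop :=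
  ∀ v : V, ∃ w : V, G.Adj v w

/-- A factorization of `G`: a family of spanning subgraphs, pairwise edge-disjoint,
whose edge sets cover `E(G)`. -/
def SimpleGraph.IsFactorization {V : Type u} {ι : Type u} (G : SimpleGraph V)
    (F : ι → SimpleGraph V) : Prop :=
  (∀ i, F i ≤ G) ∧ (Pairwise fun i j => Disjoint (F i).edgeSet (F j).edgeSet) ∧
    (⋃ i, (F i).edgeSet) = G.edgeSet

/-- In the forest `F` rooted at `v₀`, `u` is a child of `w`. -/
def SimpleGraph.IsChild {V : Type u} (F : SimpleGraph V) (v₀ u w : V) : Prop :=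
  F.Adj w u ∧ F.Reachable v₀ u ∧ F.dist v₀ u = F.dist v₀ w + 1

/-- The graph with edges `v_j v_i` for `v_i ∈ C j`, `j < i`. -/
def childGraph {V I : Type u} [LT I] (v : I ≃ V) (C : I → Set V) : SimpleGraph V :=
  SimpleGraph.fromEdgeSet {e | ∃ i j : I, j < i ∧ (v i : V) ∈ C j ∧ e = s(v j, v i)}

/-- Disjoint union of `ι`-many copies of `T`. -/
def copiesGraph (ι : Type u) {W : Type u} (T : SimpleGraph W) : SimpleGraph (ι × W) where
  Adj p q := p.1 = q.1 ∧ T.Adj p.2 q.2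
  symm := ⟨by rintro p q ⟨h1, h2⟩; exact ⟨h1.symm, h2.symm⟩⟩
  loopless := ⟨by rintro p ⟨-, h⟩; exact T.irrefl h⟩

/-!
Colour the edges greedily, by transfinite recursion, with the `κ` colours `κ.ord.ToType`.
Since degrees are `κ`, a connected component has at most `κ` vertices and hence at most `κ`
requirements: an edge has to receive a colour, a vertex has to see a colour. Enumerate the
requirements of each component `c` by the colours and meet requirement `i` of `c` at stage
`(i, c)` of the lexicographic order. Fewer than `κ` earlier stages concern `c`, so fewer than
`κ` coloured edges touch `c`; as every vertex has `κ` neighbours and there are `κ` colours, the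
requirement can be met without clashing with earlier choices. Each colour class is then a
perfect matching.
-/

open Set Function

theorem IsWellOrder.exists_compatible_choice {α S : Type*} [Nonempty S] {r : α → α → Prop}
    [IsWellOrder α r] {compat : S → S → Prop} [Std.Refl compat] [Std.Symm compat]
    {sel : α → Set S}
    (hext : ∀ a (f : α → S), (∀ b, r b a → f b ∈ sel b) →
      (∀ b c, r b a → r c a → compat (f b) (f c)) → ∃ p ∈ sel a, ∀ b, r b a → compat p (f b)) :
    ∃ f : α → S, (∀ a, f a ∈ sel a) ∧ ∀ a b, compat (f a) (f b) := by
  classical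
  let f : α → S := IsWellFounded.wf.fix fun a g =>
    if h : ∃ p ∈ sel a, ∀ b (hb : r b a), compat p (g b hb) then h.choose
    else Classical.arbitrary S
  have hf (a : α) : f a = if h : ∃ p ∈ sel a, ∀ b, r b a → compat p (f b) then h.choose
      else Classical.arbitrary S :=
    IsWellFounded.wf.fix_eq _ a
  have compat_of_lt {s : α → Prop} (h : ∀ a b, s a → s b → r b a → compat (f a) (f b))
      (a b : α) (ha : s a) (hb : s b) : compat (f a) (f b) := by
    rcases trichotomous_of r a b with hab | rfl | hba
    · exact symm (h b a hb ha hab)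
    · exact refl _
    · exact h a b ha hb hba
  have key (a : α) : f a ∈ sel a ∧ ∀ b, r b a → compat (f a) (f b) := by
    induction a using IsWellFounded.induction r with
    | ind a ih =>
      have hex := hext a f (fun b hb => (ih b hb).1)
        (compat_of_lt fun b c hb _ hcb => (ih b hb).2 c hcb)
      rw [hf, dif_pos hex]
      exact hex.choose_spec
  exact ⟨f, fun a => (key a).1,
    fun a b => compat_of_lt (s := fun _ => True) (fun a b _ _ hba => (key a).2 b hba) a b ⟨⟩ ⟨⟩⟩

/-- A set `M` of coloured edges whose elements are pairwise compatible gives every edge at most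
one colour and no two touching edges the same colour. -/
def EdgeColorCompatible {V C : Type*} (p q : Sym2 V × C) : Prop :=
  (p.1 = q.1 ∨ p.2 = q.2 ∧ ∃ x ∈ p.1, x ∈ q.1) → p = q

instance {V C : Type*} : Std.Refl (EdgeColorCompatible (V := V) (C := C)) :=
  ⟨fun _ _ => rfl⟩

instance {V C : Type*} : Std.Symm (EdgeColorCompatible (V := V) (C := C)) :=
  ⟨fun _ _ h hpq => (h <| hpq.imp Eq.symm fun ⟨hc, x, hq, hp⟩ => ⟨hc.symm, x, hp, hq⟩).symm⟩

namespace SimpleGraph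

variable {V : Type u} {G : SimpleGraph V} {κ : Cardinal.{u}}

variable (G) in
structure IsOneFactorColoring {C : Type*} (M : Set (Sym2 V × C)) : Prop where
  edge_mem : ∀ p ∈ M, p.1 ∈ G.edgeSet
  compatible : ∀ p ∈ M, ∀ q ∈ M, EdgeColorCompatible p q
  exists_color : ∀ e ∈ G.edgeSet, ∃ k, (e, k) ∈ M
  exists_edge : ∀ v k, ∃ p ∈ M, v ∈ p.1 ∧ p.2 = k

theorem IsOneFactorColoring.exists_factorization {C : Type u} {M : Set (Sym2 V × C)}
    (hM : G.IsOneFactorColoring M) :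
    ∃ (ι : Type u) (F : ι → SimpleGraph V), G.IsFactorization F ∧
      ∀ i, ∀ v : V, ∃! w : V, (F i).Adj v w := by
  let F (k : C) : SimpleGraph V := fromEdgeSet {e | (e, k) ∈ M}
  have mem_F {k : C} {e : Sym2 V} : e ∈ (F k).edgeSet ↔ (e, k) ∈ M := by
    rw [edgeSet_fromEdgeSet, mem_sdiff, Sym2.mem_diagSet]
    exact ⟨fun he => he.1, fun he => ⟨he, G.not_isDiag_of_mem_edgeSet (hM.edge_mem _ he)⟩⟩
  refine ⟨C, F, ⟨fun k v w hvw => ?_, fun i j hij => ?_, ?_⟩, fun k v => ?_⟩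
  · exact hM.edge_mem _ (mem_F.mp ((F k).mem_edgeSet.mpr hvw))
  · refine Set.disjoint_left.mpr fun e hi hj => hij ?_
    exact congrArg Prod.snd (hM.compatible _ (mem_F.mp hi) _ (mem_F.mp hj) (.inl rfl))
  · ext e
    simp only [mem_iUnion, mem_F]
    exact ⟨fun ⟨k, hk⟩ => hM.edge_mem _ hk, hM.exists_color e⟩
  · obtain ⟨⟨e, k⟩, hp, hv, rfl⟩ := hM.exists_edge v k
    obtain ⟨w, rfl⟩ := Sym2.mem_iff_exists.mp hv
    refine ⟨w, (F k).mem_edgeSet.mp (mem_F.mpr hp), fun w' hw' => ?_⟩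
    have heq := hM.compatible _ (mem_F.mp ((F k).mem_edgeSet.mpr hw')) _ hp
      (.inr ⟨rfl, v, Sym2.mem_mk_left v w', Sym2.mem_mk_left v w⟩)
    exact Sym2.congr_right.mp (congrArg Prod.fst heq)

section Cardinality

variable (G)

theorem mk_setOf_walk_length_le (hκ : ℵ₀ ≤ κ) (hdeg : ∀ v, #(G.neighborSet v) ≤ κ) (v : V)
    (n : ℕ) : #{u | ∃ p : G.Walk u v, p.length = n} ≤ κ := by
  induction n with
  | zero =>
    have hsub : {u | ∃ p : G.Walk u v, p.length = 0} ⊆ {v} := by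
      rintro u ⟨p, hp⟩
      exact Walk.eq_of_length_eq_zero hp
    exact (mk_le_mk_of_subset hsub).trans (by simpa using one_le_aleph0.trans hκ)
  | succ n ih =>
    have hsub : {u | ∃ p : G.Walk u v, p.length = n + 1} ⊆
        ⋃ w ∈ {u | ∃ p : G.Walk u v, p.length = n}, G.neighborSet w := by
      rintro u ⟨p, hp⟩
      cases p with
      | nil => simp at hp
      | cons h q => exact mem_biUnion ⟨q, by simpa using hp⟩ h.symm
    refine (mk_le_mk_of_subset hsub).trans ((mk_biUnion_le _ _).trans ?_)
    exact mul_le_of_le hκ ih (ciSup_le' fun w => hdeg w)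

theorem ConnectedComponent.mk_supp_le (hκ : ℵ₀ ≤ κ) (hdeg : ∀ v, #(G.neighborSet v) ≤ κ)
    (c : G.ConnectedComponent) : #c.supp ≤ κ := by
  induction c using ConnectedComponent.ind with
  | h v =>
    have hsub : (G.connectedComponentMk v).supp ⊆
        ⋃ n : ULift.{u} ℕ, {u | ∃ p : G.Walk u v, p.length = n.down} := by
      intro u hu
      obtain ⟨p⟩ := ConnectedComponent.eq.mp hu
      exact mem_iUnion.mpr ⟨⟨p.length⟩, p, rfl⟩
    refine (mk_le_mk_of_subset hsub).trans ((mk_iUnion_le _).trans ?_)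
    exact mul_le_of_le hκ (by simpa using hκ)
      (ciSup_le' fun n => G.mk_setOf_walk_length_le hκ hdeg v n.down)

end Cardinality

theorem connectedComponentMk_eq_of_mem_incidenceSet {v x : V} {e : Sym2 V}
    (he : e ∈ G.incidenceSet v) (hx : x ∈ e) :
    G.connectedComponentMk x = G.connectedComponentMk v := by
  obtain ⟨w, rfl⟩ := Sym2.mem_iff_exists.mp he.2
  rcases Sym2.mem_iff.mp hx with rfl | rfl
  · rfl
  · exact (ConnectedComponent.connectedComponentMk_eq_of_adj he.1).symm

section Requirements

variable (G) (C : Type u)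

/-- A one-factor colouring has to meet each of these sets of coloured edges: one for each edge
at `v` (the edge gets a colour) and one for each colour (`v` lies on an edge of that colour). -/
def requirementsAt (v : V) : Set (Set (Sym2 V × C)) :=
  (fun e => {p | p.1 = e}) '' G.incidenceSet v ∪
    range fun k => {p | p.1 ∈ G.incidenceSet v ∧ p.2 = k}

def requirements (c : G.ConnectedComponent) : Set (Set (Sym2 V × C)) :=
  ⋃ v ∈ c.supp, G.requirementsAt C v

theorem mk_requirements_le (hκ : ℵ₀ ≤ κ) (hdeg : ∀ v, #(G.neighborSet v) ≤ κ) (hC : #C ≤ κ)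
    (c : G.ConnectedComponent) : #(G.requirements C c) ≤ κ := by
  classical
  have hv (v : V) : #(G.requirementsAt C v) ≤ κ := by
    refine (mk_union_le _ _).trans (add_le_of_le hκ (mk_image_le.trans ?_) (mk_range_le.trans hC))
    exact (mk_congr (G.incidenceSetEquivNeighborSet v)).le.trans (hdeg v)
  exact (mk_biUnion_le _ _).trans
    (mul_le_of_le hκ (c.mk_supp_le G hκ hdeg) (ciSup_le' fun v => hv v))

theorem requirements_nonempty [Nonempty C] (c : G.ConnectedComponent) :
    (G.requirements C c).Nonempty :=
  ⟨_, mem_biUnion c.nonempty_supp.some_mem (Or.inr ⟨Classical.arbitrary C, rfl⟩)⟩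

variable {G C}

theorem edge_mem_of_mem_requirements {c : G.ConnectedComponent} {R : Set (Sym2 V × C)}
    (hR : R ∈ G.requirements C c) {p : Sym2 V × C} (hp : p ∈ R) :
    p.1 ∈ G.edgeSet ∧ ∀ x ∈ p.1, G.connectedComponentMk x = c := by
  obtain ⟨v, hv, hR⟩ := mem_iUnion₂.mp hR
  have hpv : p.1 ∈ G.incidenceSet v := by
    rcases hR with ⟨e, he, rfl⟩ | ⟨k, rfl⟩
    · exact (show p.1 = e from hp) ▸ he
    · exact hp.1
  exact ⟨hpv.1, fun x hx => (connectedComponentMk_eq_of_mem_incidenceSet hpv hx).trans hv⟩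

/-- The greedy step: `P` is what has been coloured so far, and `Q` is the part of it that
touches the component `c`. -/
theorem exists_compatible_mem_of_mem_requirements (hκ : ℵ₀ ≤ κ)
    (hdeg : ∀ v, κ ≤ #(G.neighborSet v)) (hC : κ ≤ #C) {c : G.ConnectedComponent}
    {R : Set (Sym2 V × C)} (hR : R ∈ G.requirements C c) {P Q : Set (Sym2 V × C)}
    (hPG : ∀ p ∈ P, p.1 ∈ G.edgeSet) (hP : ∀ p ∈ P, ∀ q ∈ P, EdgeColorCompatible p q)
    (hQ : #Q < κ) (hPQ : ∀ p ∈ P, ∀ x ∈ p.1, G.connectedComponentMk x = c → p ∈ Q) :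
    ∃ p ∈ R, ∀ q ∈ P, EdgeColorCompatible p q := by
  classical
  by_cases hsat : ∃ q ∈ P, q ∈ R
  · obtain ⟨q, hqP, hqR⟩ := hsat
    exact ⟨q, hqR, hP q hqP⟩
  push Not at hsat
  obtain ⟨v, hv, hR⟩ := mem_iUnion₂.mp hR
  rcases hR with ⟨e, he, rfl⟩ | ⟨k, rfl⟩
  · obtain ⟨k, -, hk⟩ : ∃ k ∈ Set.univ, k ∉ Prod.snd '' Q := not_subset.mp fun h =>
      (hC.trans_eq mk_univ.symm |>.trans (mk_le_mk_of_subset h)).not_gt (mk_image_le.trans_lt hQ)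
    refine ⟨(e, k), rfl, fun q hq hconf => (?_ : False).elim⟩
    rcases hconf with hqe | ⟨hkq, x, hxe, hxq⟩
    · exact hsat q hq hqe.symm
    · have hxc := (connectedComponentMk_eq_of_mem_incidenceSet he hxe).trans hv
      exact hk ⟨q, hPQ q hq x hxq hxc, hkq.symm⟩
  · set W := ⋃ q ∈ Q, (q.1.toFinset : Set V)
    have hW : #W < κ := by
      have hcard (e : Sym2 V) : #(e.toFinset : Set V) ≤ 2 := by
        rw [Finset.coe_sort_coe, mk_coe_finset, Sym2.card_toFinset]
        split_ifs <;> norm_num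
      have h2 : (2 : Cardinal) < κ := ofNat_lt_aleph0.trans_le hκ
      have hle : ⨆ q : Q, #(q.1.1.toFinset : Set V) ≤ 2 := ciSup_le' fun q => hcard q.1.1
      exact (mk_biUnion_le _ Q).trans_lt (mul_lt_of_lt hκ hQ (hle.trans_lt h2))
    obtain ⟨w, hvw, hw⟩ : ∃ w ∈ G.neighborSet v, w ∉ W := not_subset.mp fun h =>
      ((hdeg v).trans (mk_le_mk_of_subset h)).not_gt hW
    have hwc : G.connectedComponentMk w = c :=
      (ConnectedComponent.connectedComponentMk_eq_of_adj hvw).symm.trans hv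
    refine ⟨(s(v, w), k), ⟨⟨hvw, Sym2.mem_mk_left v w⟩, rfl⟩, fun q hq hconf => (?_ : False).elim⟩
    have hwq : w ∉ q.1 := fun hwq =>
      hw (mem_biUnion (hPQ q hq w hwq hwc) (Sym2.mem_toFinset.mpr hwq))
    rcases hconf with hqe | ⟨hkq, x, hx, hxq⟩
    · exact hwq (hqe ▸ Sym2.mem_mk_right v w)
    · rcases Sym2.mem_iff.mp hx with rfl | rfl
      · exact hsat q hq ⟨⟨hPG q hq, hxq⟩, hkq.symm⟩
      · exact hwq hxq

theorem isOneFactorColoring_of_forall_requirements {M : Set (Sym2 V × C)}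
    (hM : ∀ p ∈ M, ∃ c, ∃ R ∈ G.requirements C c, p ∈ R)
    (hcompat : ∀ p ∈ M, ∀ q ∈ M, EdgeColorCompatible p q)
    (hreq : ∀ c, ∀ R ∈ G.requirements C c, ∃ p ∈ M, p ∈ R) : G.IsOneFactorColoring M where
  edge_mem p hp := by
    obtain ⟨c, R, hR, hpR⟩ := hM p hp
    exact (edge_mem_of_mem_requirements hR hpR).1
  compatible := hcompat
  exists_color e he := by
    have hR : {p : Sym2 V × C | p.1 = e} ∈ G.requirements C (G.connectedComponentMk e.out.1) :=
      mem_biUnion rfl (Or.inl ⟨e, ⟨he, Sym2.out_fst_mem e⟩, rfl⟩)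
    obtain ⟨⟨_, k⟩, hp, rfl⟩ := hreq _ _ hR
    exact ⟨k, hp⟩
  exists_edge v k := by
    have hR : {p : Sym2 V × C | p.1 ∈ G.incidenceSet v ∧ p.2 = k} ∈
        G.requirements C (G.connectedComponentMk v) :=
      mem_biUnion rfl (Or.inr ⟨k, rfl⟩)
    obtain ⟨p, hp, ⟨-, hv⟩, hk⟩ := hreq _ _ hR
    exact ⟨p, hp, hv, hk⟩

theorem exists_compatible_mem_at_stage [Preorder C] (hκ : ℵ₀ ≤ κ)
    (hdeg : ∀ v, κ ≤ #(G.neighborSet v)) (hC : κ ≤ #C)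
    {sel : C × G.ConnectedComponent → Set (Sym2 V × C)} (hsel : ∀ a, sel a ∈ G.requirements C a.2)
    {r : C × G.ConnectedComponent → C × G.ConnectedComponent → Prop} {i : C}
    {c : G.ConnectedComponent} (hr : ∀ j, r (j, c) (i, c) → j < i) (hi : #(Iio i) < κ)
    {f : C × G.ConnectedComponent → Sym2 V × C} (hf : ∀ b, r b (i, c) → f b ∈ sel b)
    (hpair : ∀ b b', r b (i, c) → r b' (i, c) → EdgeColorCompatible (f b) (f b')) :
    ∃ p ∈ sel (i, c), ∀ b, r b (i, c) → EdgeColorCompatible p (f b) := by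
  have hfG (b) (hb : r b (i, c)) := edge_mem_of_mem_requirements (hsel b) (hf b hb)
  obtain ⟨p, hpR, hp⟩ := exists_compatible_mem_of_mem_requirements hκ hdeg hC (hsel (i, c))
    (P := f '' {b | r b (i, c)}) (Q := (fun j => f (j, c)) '' Iio i)
    (by rintro _ ⟨b, hb, rfl⟩; exact (hfG b hb).1)
    (by rintro _ ⟨b, hb, rfl⟩ _ ⟨b', hb', rfl⟩; exact hpair b b' hb hb')
    (mk_image_le.trans_lt hi)
    (by
      rintro _ ⟨⟨j, d⟩, hb, rfl⟩ x hx hxc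
      obtain rfl : d = c := ((hfG _ hb).2 x hx).symm.trans hxc
      exact ⟨j, hr j hb, rfl⟩)
  exact ⟨p, hpR, fun b hb => hp _ ⟨b, hb, rfl⟩⟩

end Requirements

theorem exists_isOneFactorColoring (hκ : ℵ₀ ≤ κ) (hreg : G.CardRegular κ) :
    ∃ M : Set (Sym2 V × κ.ord.ToType), G.IsOneFactorColoring M := by
  rcases isEmpty_or_nonempty V with hV | ⟨⟨v⟩⟩
  · exact ⟨∅, by simp, by simp, fun e => isEmptyElim e, fun v => isEmptyElim v⟩
  set C := κ.ord.ToType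
  have hC : #C = κ := mk_ord_toType κ
  have : Nonempty C := mk_ne_zero_iff.mp (hC.trans_ne (aleph0_pos.trans_le hκ).ne')
  have : Nonempty (Sym2 V) := ⟨s(v, v)⟩
  have henum (c : G.ConnectedComponent) : ∃ g : C → G.requirements C c, Surjective g := by
    have := (requirements_nonempty G C c).to_subtype
    obtain ⟨g⟩ := (le_def _ _).mp
      ((mk_requirements_le G C hκ (fun v => (hreg v).le) hC.le c).trans_eq hC.symm)
    exact ⟨invFun g, invFun_surjective g.injective⟩
  choose enum henum using henum
  obtain ⟨f, hsel, hcompat⟩ := IsWellOrder.exists_compatible_choice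
      (r := Prod.Lex (α := C) (β := G.ConnectedComponent) (· < ·) WellOrderingRel)
      (sel := fun a => (enum a.2 a.1 : Set (Sym2 V × C)))
      fun ⟨i, c⟩ _ => exists_compatible_mem_at_stage hκ (fun v => (hreg v).ge) hC.ge
        (fun a => (enum a.2 a.1).2)
        (fun j hj => (Prod.lex_def.mp hj).resolve_right fun h => irrefl _ h.2)
        ((mk_Iio_lt i (by rw [hC, Ordinal.type_toType])).trans_eq hC)
  refine ⟨range f, isOneFactorColoring_of_forall_requirements ?_ ?_ fun c R hR => ?_⟩
  · rintro _ ⟨⟨i, c⟩, rfl⟩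
    exact ⟨c, _, (enum c i).2, hsel (i, c)⟩
  · rintro _ ⟨a, rfl⟩ _ ⟨b, rfl⟩
    exact hcompat a b
  · obtain ⟨i, hi⟩ := henum c ⟨R, hR⟩
    exact ⟨f (i, c), mem_range_self _, by simpa [hi] using hsel (i, c)⟩

end SimpleGraph

/-- Kőnig 1936: every `κ`-regular graph (κ infinite) has a 1-factorization, i.e. a
decomposition of its edge set into perfect matchings. -/
theorem stmt_0 (κ : Cardinal.{u}) (hκ : ℵ₀ ≤ κ) {V : Type u} (G : SimpleGraph V)
    (hreg : G.CardRegular κ) :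
    ∃ (ι : Type u) (F : ι → SimpleGraph V), G.IsFactorization F ∧
      ∀ i, ∀ v : V, ∃! w : V, (F i).Adj v w := by
  obtain ⟨M, hM⟩ := G.exists_isOneFactorColoring hκ hreg
  exact hM.exists_factorization
end

section
/- Let κ be an infinite cardinal and let G be a connected graph. Then G has a factorization into κ many κ-regular spanning forests (i.e., a family of κ edge-disjoint spanning subgraphs, each a κ-regular forest, whose union of edge sets is E(G)) if and only if G is κ-regular. -/
/-!
In a factorization into `κ` factors of degree `κ`, every vertex has at most `κ · κ = κ`
neighbours, and at least `κ` since each factor is a subgraph.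

Conversely, a connected `κ`-regular graph has exactly `κ` vertices, so they can be well-ordered
with every initial segment of size `< κ`; then every vertex still has `κ` neighbours above it.
Enumerate `κ` tasks "give `v` one more upward edge of colour `i`", each pair `(v, i)` occurring
`κ` times, and serve them by transfinite recursion with distinct upper endpoints. At each vertex at
most one incoming edge from below has been coloured, so the remaining edges from below can be
coloured injectively. Every colour class then has at most one lower neighbour at each vertex,
hence is a forest, and `κ` upper neighbours at each vertex.
-/

open Cardinal

universe u

open Set Function

namespace Cardinal

variable {α β : Type u}

theorem exists_injective_forall_mem [LinearOrder α] [WellFoundedLT α] (A : α → Set β)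
    (hA : ∀ a, #(Iio a) < #(A a)) : ∃ f : α → β, Injective f ∧ ∀ a, f a ∈ A a := by
  -- choose `f a` by well-founded recursion, avoiding the fewer than `#(A a)` earlier values
  have hfresh : ∀ a (g : ∀ b < a, β), (A a \ range fun b : Iio a => g b b.2).Nonempty :=
    fun a _ => sdiff_nonempty_of_mk_lt_mk (mk_range_le.trans_lt (hA a))
  let f : α → β := wellFounded_lt.fix fun a g => (hfresh a g).some
  have hf : ∀ a, f a ∈ A a \ range fun b : Iio a => f b := fun a => by
    rw [show f a = _ from wellFounded_lt.fix_eq _ a]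
    exact (hfresh a fun b _ => f b).some_mem
  refine ⟨f, fun a b hab => ?_, fun a => (hf a).1⟩
  rcases lt_trichotomy a b with h | rfl | h
  · exact ((hf b).2 ⟨⟨a, h⟩, hab⟩).elim
  · rfl
  · exact ((hf a).2 ⟨⟨b, h⟩, hab.symm⟩).elim

theorem exists_injOn_apply_eq {s : Set α} (hs : #s ≤ #β) (a : α) (b : β) :
    ∃ g : α → β, InjOn g s ∧ g a = b := by
  classical
  obtain ⟨e⟩ := hs
  set g₀ : α → β := extend Subtype.val e fun _ => b
  have hg₀ : ∀ x : s, g₀ x = e x := Subtype.val_injective.extend_apply _ _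
  refine ⟨Equiv.swap (g₀ a) b ∘ g₀, fun x hx y hy hxy => ?_, by simp⟩
  have := (Equiv.swap (g₀ a) b).injective hxy
  rw [hg₀ ⟨x, hx⟩, hg₀ ⟨y, hy⟩] at this
  exact congrArg Subtype.val (e.injective this)

end Cardinal

namespace SimpleGraph

variable {V ι : Type u}

theorem IsFactorization.neighborSet_eq_iUnion {G : SimpleGraph V} {F : ι → SimpleGraph V}
    (hF : G.IsFactorization F) (v : V) : G.neighborSet v = ⋃ i, (F i).neighborSet v := by
  ext w
  rw [mem_neighborSet, ← mem_edgeSet, ← hF.2.2, mem_iUnion, mem_iUnion]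
  rfl

theorem IsFactorization.cardRegular {G : SimpleGraph V} {F : ι → SimpleGraph V}
    {κ : Cardinal.{u}} (hF : G.IsFactorization F) (hκ : ℵ₀ ≤ κ) (hι : #ι = κ)
    (hreg : ∀ i, (F i).CardRegular κ) : G.CardRegular κ := by
  have hne : Nonempty ι := mk_ne_zero_iff.1 (hι ▸ (aleph0_pos.trans_le hκ).ne')
  intro v
  apply le_antisymm
  · calc #(G.neighborSet v) = #(⋃ i, (F i).neighborSet v) := by rw [hF.neighborSet_eq_iUnion]
      _ ≤ #ι * ⨆ i, #((F i).neighborSet v) := mk_iUnion_le _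
      _ = κ := by simp [hreg _ v, hι, mul_eq_self hκ]
  · obtain ⟨i₀⟩ := hne
    exact hreg i₀ v ▸ mk_le_mk_of_subset fun w hw => hF.1 i₀ hw

theorem Connected.mk_le {G : SimpleGraph V} (hG : G.Connected) [Infinite ι]
    (hdeg : ∀ v, #(G.neighborSet v) ≤ #ι) : #V ≤ #ι := by
  obtain ⟨v₀⟩ := hG.nonempty
  have hcode : ∀ v, ∃ s : ι → V, G.neighborSet v ⊆ range s := fun v => by
    obtain ⟨e⟩ := hdeg v
    exact ⟨extend e Subtype.val fun _ => v, fun w hw =>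
      ⟨e ⟨w, hw⟩, e.injective.extend_apply _ _ ⟨w, hw⟩⟩⟩
  choose s hs using hcode
  -- a vertex is decoded from the list of choices made along a walk from `v₀`
  let decode : List ι → V := List.foldr (fun a v => s v a) v₀
  have hdecode : Surjective decode := fun w => by
    obtain ⟨p⟩ := hG.preconnected v₀ w
    induction p using Walk.concatRec with
    | Hnil => exact ⟨[], rfl⟩
    | Hconcat p h ih =>
      obtain ⟨l, rfl⟩ := ih
      obtain ⟨a, ha⟩ := hs _ h
      exact ⟨a :: l, ha⟩
  simpa [mk_list_eq_mk] using mk_le_of_surjective hdecode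

def colorClass (G : SimpleGraph V) (c : Sym2 V → ι) (i : ι) : SimpleGraph V :=
  fromEdgeSet {e ∈ G.edgeSet | c e = i}

theorem colorClass_adj {G : SimpleGraph V} {c : Sym2 V → ι} {i : ι} {v w : V} :
    (G.colorClass c i).Adj v w ↔ G.Adj v w ∧ c s(v, w) = i := by
  simp only [colorClass, fromEdgeSet_adj, mem_ofPred_eq, mem_edgeSet]
  exact ⟨fun h => h.1, fun h => ⟨h, h.1.ne⟩⟩

theorem edgeSet_colorClass (G : SimpleGraph V) (c : Sym2 V → ι) (i : ι) :
    (G.colorClass c i).edgeSet = {e ∈ G.edgeSet | c e = i} := by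
  rw [colorClass, edgeSet_fromEdgeSet, sdiff_eq_left, Set.disjoint_left]
  exact fun e he => G.not_isDiag_of_mem_edgeSet he.1

theorem isFactorization_colorClass (G : SimpleGraph V) (c : Sym2 V → ι) :
    G.IsFactorization (G.colorClass c) := by
  refine ⟨fun i v w h => (colorClass_adj.1 h).1, fun i j hij => ?_, ?_⟩
  · change Disjoint _ _
    rw [edgeSet_colorClass, edgeSet_colorClass, Set.disjoint_left]
    exact fun e hi hj => hij (hi.2.symm.trans hj.2)
  · ext e
    simp [edgeSet_colorClass]

theorem isAcyclic_of_lt_adj_eq [LinearOrder V] {H : SimpleGraph V}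
    (h : ∀ ⦃x y w⦄, x < w → y < w → H.Adj x w → H.Adj y w → x = y) : H.IsAcyclic := by
  intro v p hp
  -- rotate the cycle to start at its largest vertex, whose two cycle neighbours are then smaller
  obtain ⟨w, hw, hmax⟩ := p.support.toFinset.exists_max_image id ⟨v, by simp⟩
  have hw : w ∈ p.support := List.mem_toFinset.1 hw
  set q := p.rotate w hw
  have hq : q.IsCycle := hp.rotate hw
  have hle : ∀ x ∈ q.support, x < w ∨ x = w := fun x hx =>
    (hmax x (List.mem_toFinset.2 ((p.mem_support_rotate_iff w hw).1 hx))).lt_or_eq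
  have hsnd : q.snd < w :=
    (hle _ (q.getVert_mem_support 1)).resolve_right (q.adj_snd hq.not_nil).ne'
  have hpen : q.penultimate < w :=
    (hle _ (q.getVert_mem_support _)).resolve_right (q.adj_penultimate hq.not_nil).ne
  exact hq.snd_ne_penultimate
    (h hsnd hpen (q.adj_snd hq.not_nil).symm (q.adj_penultimate hq.not_nil))

theorem CardRegular.le_mk_neighborSet_inter_Ioi [LinearOrder V] {G : SimpleGraph V}
    {κ : Cardinal.{u}} (hG : G.CardRegular κ) (hκ : ℵ₀ ≤ κ) {v : V} (hv : #(Iio v) < κ) :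
    κ ≤ #(G.neighborSet v ∩ Ioi v : Set V) := by
  by_contra! hlt
  have hsplit : G.neighborSet v ⊆ (G.neighborSet v ∩ Ioi v) ∪ Iio v := fun w hw =>
    (G.ne_of_adj hw).lt_or_gt.elim (fun h => Or.inl ⟨hw, h⟩) Or.inr
  have := (mk_le_mk_of_subset hsplit).trans_lt
    ((mk_union_le _ _).trans_lt (add_lt_of_lt hκ hlt hv))
  exact (hG v ▸ this).false

theorem CardRegular.exists_acyclic_factorization_of_coloring [LinearOrder V]
    {G : SimpleGraph V} {κ : Cardinal.{u}} (hG : G.CardRegular κ) (f : V → V → ι)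
    (hf_injOn : ∀ w, InjOn (f · w) (Iio w))
    (hf_le : ∀ v i, κ ≤ #{w | G.Adj v w ∧ v < w ∧ f v w = i}) :
    ∃ F : ι → SimpleGraph V, G.IsFactorization F ∧
      ∀ i, (F i).IsAcyclic ∧ (F i).CardRegular κ := by
  set c : Sym2 V → ι := fun e => f e.inf e.sup
  have hc : ∀ {v w}, v < w → c s(v, w) = f v w := fun h => by simp [c, h.le]
  refine ⟨G.colorClass c, G.isFactorization_colorClass c, fun i => ⟨?_, fun v => ?_⟩⟩
  · refine isAcyclic_of_lt_adj_eq fun x y w hx hy hxw hyw => hf_injOn w hx hy ?_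
    rw [colorClass_adj, hc hx] at hxw
    rw [colorClass_adj, hc hy] at hyw
    exact hxw.2.trans hyw.2.symm
  · refine le_antisymm (hG v ▸ mk_le_mk_of_subset fun w hw => (colorClass_adj.1 hw).1)
      ((hf_le v i).trans (mk_le_mk_of_subset ?_))
    rintro w ⟨hvw, hlt, rfl⟩
    exact colorClass_adj.2 ⟨hvw, hc hlt⟩

theorem CardRegular.exists_coloring [LinearOrder V] {G : SimpleGraph V} {κ : Cardinal.{u}}
    (hG : G.CardRegular κ) (hκ : ℵ₀ ≤ κ) (hV : #V = κ)
    (hsmall : ∀ v : V, #(Iio v) < κ) :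
    ∃ f : V → V → κ.ord.ToType, (∀ w, InjOn (f · w) (Iio w)) ∧
      ∀ v i, κ ≤ #{w | G.Adj v w ∧ v < w ∧ f v w = i} := by
  have hι : #κ.ord.ToType = κ := mk_ord_toType κ
  have : Nonempty κ.ord.ToType :=
    mk_ne_zero_iff.1 (hι.trans_ne (aleph0_pos.trans_le hκ).ne')
  -- task `α` asks for an upward edge at `(τ α).1` of colour `(τ α).2.1`;
  -- each such request is made κ times
  obtain ⟨τ⟩ : Nonempty (κ.ord.ToType ≃ V × κ.ord.ToType × κ.ord.ToType) :=
    Cardinal.eq.1 (by simp [hι, hV, mul_eq_self hκ])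
  obtain ⟨head, head_inj, head_mem⟩ := Cardinal.exists_injective_forall_mem
    (fun α => G.neighborSet (τ α).1 ∩ Ioi (τ α).1)
    fun α => ((mk_Iio_lt α (by simp)).trans_eq hι).trans_le
      (hG.le_mk_neighborSet_inter_Ioi hκ (hsmall _))
  -- as `head` is injective, each `w` has a prescribed colour on at most one edge from below
  have hcolor : ∀ w, ∃ g : V → κ.ord.ToType, InjOn g (Iio w) ∧
      ∀ α, head α = w → g (τ α).1 = (τ α).2.1 := by
    intro w
    have hw : #(Iio w) ≤ #κ.ord.ToType := (hsmall w).le.trans hι.ge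
    by_cases h : ∃ α, head α = w
    · obtain ⟨α, rfl⟩ := h
      obtain ⟨g, hg, hgα⟩ := Cardinal.exists_injOn_apply_eq hw (τ α).1 (τ α).2.1
      exact ⟨g, hg, fun β hβ => head_inj hβ ▸ hgα⟩
    · obtain ⟨g, hg, -⟩ := Cardinal.exists_injOn_apply_eq hw w (Classical.arbitrary _)
      exact ⟨g, hg, fun α hα => (h ⟨α, hα⟩).elim⟩
  choose g hg_injOn hg_head using hcolor
  refine ⟨fun v w => g w v, hg_injOn, fun v i => ?_⟩
  have hmem : ∀ γ, head (τ.symm (v, i, γ)) ∈ {w | G.Adj v w ∧ v < w ∧ g w v = i} := by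
    intro γ
    obtain ⟨hadj, hlt⟩ := head_mem (τ.symm (v, i, γ))
    have hcol := hg_head _ (τ.symm (v, i, γ)) rfl
    simp only [Equiv.apply_symm_apply] at hadj hlt hcol
    exact ⟨hadj, hlt, hcol⟩
  refine hι.ge.trans (mk_le_of_injective (f := fun γ => ⟨_, hmem γ⟩) fun γ γ' h => ?_)
  simpa using head_inj (congrArg Subtype.val h)

end SimpleGraph

/-- A connected graph has a factorization into `κ` many `κ`-regular spanning forests
iff it is `κ`-regular. -/
theorem stmt_2 (κ : Cardinal.{u}) (hκ : ℵ₀ ≤ κ) {V : Type u} (G : SimpleGraph V)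
    (hconn : G.Connected) :
    (∃ F : κ.ord.ToType → SimpleGraph V, G.IsFactorization F ∧
      ∀ m, (F m).IsAcyclic ∧ (F m).CardRegular κ) ↔ G.CardRegular κ := by
  have hι : #κ.ord.ToType = κ := mk_ord_toType κ
  refine ⟨fun ⟨F, hF, hFreg⟩ => hF.cardRegular hκ hι fun i => (hFreg i).2, fun hG => ?_⟩
  have : Infinite κ.ord.ToType := infinite_iff.2 (hκ.trans_eq hι.symm)
  have hV : #V = κ := le_antisymm ((hconn.mk_le fun v => ((hG v).trans hι.symm).le).trans_eq hι)
    (hG hconn.nonempty.some ▸ mk_set_le _)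
  obtain ⟨e⟩ : Nonempty (V ≃ κ.ord.ToType) := Cardinal.eq.1 (hV.trans hι.symm)
  let : LinearOrder V := LinearOrder.lift' e e.injective
  have hsmall : ∀ v : V, #(Iio v) < κ := fun v =>
    (mk_preimage_of_injective e (Iio (e v)) e.injective).trans_lt
      ((mk_Iio_lt _ (by simp)).trans_eq hι)
  obtain ⟨f, hf_injOn, hf_le⟩ := hG.exists_coloring hκ hV hsmall
  exact hG.exists_acyclic_factorization_of_coloring f hf_injOn hf_le
end

section
/- Let κ be an infinite cardinal and let λ be a nonzero cardinal with λ ≤ κ. Then every connected κ-regular graph has a λ-factorization, i.e., a decomposition of its edge set into spanning λ-regular subgraphs. -/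
/-!
The case `λ = κ` is trivial, so let `λ < κ`; the `λ`-factors are the color classes of an edge
coloring with `κ` colors built by transfinite recursion. A connected graph of degree `κ` has at
most `κ` vertices, so the tasks "color the edge `e`" and "give `v` exactly `λ` edges of color `i`"
can be well-ordered so that each has fewer than `κ` predecessors; as a task colors at most
`λ < κ` edges, fewer than `κ` edges are colored before any task. An edge task colors its edge, if
still uncolored, with a color not used so far; the task `(v, i)` adds just enough `i`-edges `vw`
to bring the `i`-degree of `v` up to `λ`, using only neighbors `w` that meet no colored edge yet
(`κ` of them remain). Hence any other task creates an `i`-edge at `v` only while `v` has no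
`i`-edge at all: `v` has at most one `i`-edge before its own task, exactly `λ` right after it,
and gains none later.
-/

open Cardinal

universe u

open Set SimpleGraph

theorem SimpleGraph.Connected.mk_le_s6 {V : Type u} {G : SimpleGraph V} {κ : Cardinal.{u}}
    (hconn : G.Connected) (hκ : ℵ₀ ≤ κ) (hdeg : ∀ v, #(G.neighborSet v) ≤ κ) : #V ≤ κ := by
  obtain ⟨v₀⟩ := hconn.nonempty
  let B : ℕ → Set V := fun n => {w | ∃ p : G.Walk w v₀, p.length = n}
  have hB : ∀ n, #(B n) ≤ κ := by
    intro n
    induction n with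
    | zero =>
      have hsub : B 0 ⊆ {v₀} := by
        rintro w ⟨p, hp⟩
        cases p with
        | nil => rfl
        | cons _ _ => simp at hp
      exact (mk_le_mk_of_subset hsub).trans (by simpa using one_le_aleph0.trans hκ)
    | succ n ih =>
      have hsub : B (n + 1) ⊆ ⋃ u ∈ B n, G.neighborSet u := by
        rintro w ⟨p, hp⟩
        cases p with
        | nil => simp at hp
        | cons h q => exact mem_biUnion ⟨q, by simpa using hp⟩ h.symm
      calc #(B (n + 1)) ≤ #(B n) * ⨆ u : B n, #(G.neighborSet u) :=
            (mk_le_mk_of_subset hsub).trans (mk_biUnion_le _ _)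
        _ ≤ κ * κ := mul_le_mul' ih (ciSup_le' fun u => hdeg u)
        _ = κ := mul_eq_self hκ
  have hcover : (univ : Set V) ⊆ ⋃ n : ULift.{u} ℕ, B n.down := fun w _ =>
    let ⟨p⟩ := hconn.preconnected w v₀
    mem_iUnion.2 ⟨⟨p.length⟩, p, rfl⟩
  calc #V = #(univ : Set V) := mk_univ.symm
    _ ≤ #(ULift.{u} ℕ) * ⨆ n : ULift.{u} ℕ, #(B n.down) :=
        (mk_le_mk_of_subset hcover).trans (mk_iUnion_le _)
    _ ≤ ℵ₀ * κ := mul_le_mul' (by simp) (ciSup_le' fun n => hB n.down)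
    _ = κ := aleph0_mul_eq hκ

theorem Sym2.mk_setOf_mem_le {α : Type u} (e : Sym2 α) : #{x | x ∈ e} ≤ 2 := by
  induction e using Sym2.ind with
  | _ a b =>
    have h : {x | x ∈ s(a, b)} = {a, b} := Set.ext fun _ => Sym2.mem_iff
    rw [h]
    exact mk_insert_le.trans (by simp [one_add_one_eq_two])

theorem Cardinal.le_mk_sdiff_of_mk_lt {α : Type u} {S T : Set α} {κ : Cardinal.{u}}
    (hκ : ℵ₀ ≤ κ) (hS : κ ≤ #S) (hT : #T < κ) : κ ≤ #(S \ T : Set α) := by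
  by_contra! h
  exact (hS.trans (le_mk_sdiff_add_mk S T)).not_gt (add_lt_of_lt hκ h hT)

namespace RegularFactorization

variable {V ι : Type u}

def colorGraph (P : Set (Sym2 V × ι)) (i : ι) : SimpleGraph V :=
  fromEdgeSet {e | (e, i) ∈ P}

theorem mem_neighborSet_colorGraph {P : Set (Sym2 V × ι)} {i : ι} {v w : V} :
    w ∈ (colorGraph P i).neighborSet v ↔ (s(v, w), i) ∈ P ∧ v ≠ w := by
  simp [colorGraph]

theorem neighborSet_colorGraph_mono {P Q : Set (Sym2 V × ι)} (h : P ⊆ Q) (i : ι) (v : V) :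
    (colorGraph P i).neighborSet v ⊆ (colorGraph Q i).neighborSet v :=
  neighborSet_mono (fromEdgeSet_mono fun _ he => h he) v

def IsUncolored (P : Set (Sym2 V × ι)) (e : Sym2 V) : Prop :=
  ∀ i, (e, i) ∉ P

def touched (P : Set (Sym2 V × ι)) : Set V :=
  ⋃ p ∈ P, {x | x ∈ p.1}

theorem isUncolored_of_notMem_touched {P : Set (Sym2 V × ι)} (v : V) {w : V}
    (hw : w ∉ touched P) : IsUncolored P s(v, w) :=
  fun _ hi => hw (mem_biUnion hi (Sym2.mem_mk_right v w))

theorem neighborSet_colorGraph_eq_empty_of_notMem_touched {P : Set (Sym2 V × ι)} {v : V}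
    (hv : v ∉ touched P) (i : ι) : (colorGraph P i).neighborSet v = ∅ :=
  eq_empty_of_forall_notMem fun w hw =>
    hv (mem_biUnion (mem_neighborSet_colorGraph.1 hw).1 (Sym2.mem_mk_left v w))

theorem neighborSet_colorGraph_eq_empty_of_notMem_image {P : Set (Sym2 V × ι)} {i : ι}
    (hi : i ∉ Prod.snd '' P) (v : V) : (colorGraph P i).neighborSet v = ∅ :=
  eq_empty_of_forall_notMem fun _ hw => hi ⟨_, (mem_neighborSet_colorGraph.1 hw).1, rfl⟩

theorem mk_touched_lt {P : Set (Sym2 V × ι)} {κ : Cardinal.{u}} (hκ : ℵ₀ ≤ κ) (hP : #P < κ) :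
    #(touched P) < κ :=
  calc #(touched P) ≤ #P * ⨆ p : P, #{x | x ∈ p.1.1} := mk_biUnion_le _ _
    _ ≤ #P * 2 := mul_le_mul' le_rfl (ciSup_le' fun _ => Sym2.mk_setOf_mem_le _)
    _ < κ := mul_lt_of_lt hκ hP ((natCast_lt_aleph0 (n := 2)).trans_le hκ)

theorem isFactorization_colorGraph {G : SimpleGraph V} {P : Set (Sym2 V × ι)}
    (hG : ∀ p ∈ P, p.1 ∈ G.edgeSet) (hfun : ∀ e i j, (e, i) ∈ P → (e, j) ∈ P → i = j)
    (hcov : ∀ e ∈ G.edgeSet, ∃ i, (e, i) ∈ P) : G.IsFactorization (colorGraph P) := by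
  refine ⟨fun i v w h => hG _ (mem_neighborSet_colorGraph.1 h).1, fun i j hij => ?_, ?_⟩
  · simp only [colorGraph, edgeSet_fromEdgeSet]
    exact disjoint_left.2 fun e hi hj => hij (hfun e i j hi.1 hj.1)
  · ext e
    simp only [colorGraph, edgeSet_fromEdgeSet, mem_iUnion, mem_sdiff, mem_ofPred_eq]
    refine ⟨fun ⟨i, hi, _⟩ => hG _ hi, fun he => ?_⟩
    obtain ⟨i, hi⟩ := hcov e he
    exact ⟨i, hi, G.not_isDiag_of_mem_edgeSet he⟩

variable (G : SimpleGraph V) (lam : Cardinal.{u})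

open Classical in
noncomputable def edgeStep (P : Set (Sym2 V × ι)) (e : Sym2 V) : Set (Sym2 V × ι) :=
  if h : e ∈ G.edgeSet ∧ IsUncolored P e ∧ ∃ i, i ∉ Prod.snd '' P then {(e, h.2.2.choose)}
  else ∅

open Classical in
noncomputable def vertexStep (P : Set (Sym2 V × ι)) (v : V) (i : ι) : Set (Sym2 V × ι) :=
  if h : ∃ W ⊆ G.neighborSet v \ touched P, #((colorGraph P i).neighborSet v) + #W = lam then
    (fun w => (s(v, w), i)) '' h.choose
  else ∅

/-- The task `Sum.inl e` colors the edge `e`, the task `Sum.inr (v, i)` brings the `i`-degree of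
`v` up to `λ`; `step G lam P t` is the set of (edge, color) pairs that `t` adds to `P`. -/
noncomputable def step (P : Set (Sym2 V × ι)) : Sym2 V ⊕ V × ι → Set (Sym2 V × ι) :=
  Sum.elim (edgeStep G P) fun t => vertexStep G lam P t.1 t.2

variable {G lam}

theorem mem_edgeStep {P : Set (Sym2 V × ι)} {e e' : Sym2 V} {j : ι}
    (h : (e', j) ∈ edgeStep G P e) :
    e' = e ∧ e ∈ G.edgeSet ∧ IsUncolored P e ∧ j ∉ Prod.snd '' P := by
  unfold edgeStep at h
  split_ifs at h with hc
  · obtain ⟨rfl, rfl⟩ := Prod.mk.inj (mem_singleton_iff.1 h)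
    exact ⟨rfl, hc.1, hc.2.1, hc.2.2.choose_spec⟩
  · exact absurd h (notMem_empty _)

theorem edgeStep_nonempty {P : Set (Sym2 V × ι)} {e : Sym2 V} (he : e ∈ G.edgeSet)
    (hP : IsUncolored P e) (hi : ∃ i, i ∉ Prod.snd '' P) : (edgeStep G P e).Nonempty := by
  rw [edgeStep, dif_pos ⟨he, hP, hi⟩]
  exact singleton_nonempty _

theorem edgeStep_subsingleton (P : Set (Sym2 V × ι)) (e : Sym2 V) :
    (edgeStep G P e).Subsingleton := by
  unfold edgeStep
  split_ifs
  exacts [subsingleton_singleton, subsingleton_empty]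

theorem mem_vertexStep {P : Set (Sym2 V × ι)} {v : V} {i j : ι} {e : Sym2 V}
    (h : (e, j) ∈ vertexStep G lam P v i) :
    j = i ∧ ∃ w ∈ G.neighborSet v \ touched P, e = s(v, w) := by
  unfold vertexStep at h
  split_ifs at h with hc
  · obtain ⟨w, hw, he⟩ := h
    obtain ⟨rfl, rfl⟩ := Prod.mk.inj he
    exact ⟨rfl, w, hc.choose_spec.1 hw, rfl⟩
  · exact absurd h (notMem_empty _)

theorem exists_vertexStep_eq_image {P : Set (Sym2 V × ι)} {v : V} {i : ι}
    (hN : #((colorGraph P i).neighborSet v) ≤ lam)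
    (hcand : lam ≤ #(G.neighborSet v \ touched P : Set V)) :
    ∃ W ⊆ G.neighborSet v \ touched P, #((colorGraph P i).neighborSet v) + #W = lam ∧
      vertexStep G lam P v i = (fun w => (s(v, w), i)) '' W := by
  obtain ⟨d, hd⟩ := exists_add_of_le hN
  have hdlam : d ≤ lam := hd ▸ le_add_self
  obtain ⟨W, hWsub, hWcard⟩ := le_mk_iff_exists_subset.1 (hdlam.trans hcand)
  have h : ∃ W ⊆ G.neighborSet v \ touched P, #((colorGraph P i).neighborSet v) + #W = lam :=
    ⟨W, hWsub, by rw [hWcard, hd]⟩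
  exact ⟨h.choose, h.choose_spec.1, h.choose_spec.2, by rw [vertexStep, dif_pos h]⟩

theorem fst_mem_edgeSet_of_mem_step {P : Set (Sym2 V × ι)} {t : Sym2 V ⊕ V × ι}
    {e : Sym2 V} {j : ι} (h : (e, j) ∈ step G lam P t) : e ∈ G.edgeSet := by
  rcases t with e' | ⟨v, i⟩
  · obtain ⟨rfl, he, -⟩ := mem_edgeStep h
    exact he
  · obtain ⟨-, w, hw, rfl⟩ := mem_vertexStep h
    exact hw.1

theorem isUncolored_of_mem_step {P : Set (Sym2 V × ι)} {t : Sym2 V ⊕ V × ι}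
    {e : Sym2 V} {j : ι} (h : (e, j) ∈ step G lam P t) : IsUncolored P e := by
  rcases t with e' | ⟨v, i⟩
  · obtain ⟨rfl, -, he, -⟩ := mem_edgeStep h
    exact he
  · obtain ⟨-, w, hw, rfl⟩ := mem_vertexStep h
    exact isUncolored_of_notMem_touched v hw.2

theorem eq_of_mem_step {P : Set (Sym2 V × ι)} {t : Sym2 V ⊕ V × ι} {e : Sym2 V} {i j : ι}
    (hi : (e, i) ∈ step G lam P t) (hj : (e, j) ∈ step G lam P t) : i = j := by
  rcases t with e' | ⟨v, k⟩
  · exact (Prod.mk.inj (edgeStep_subsingleton P e' hi hj)).2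
  · exact (mem_vertexStep hi).1.trans (mem_vertexStep hj).1.symm

theorem mk_step_le (hlam : lam ≠ 0) (P : Set (Sym2 V × ι)) (t : Sym2 V ⊕ V × ι) :
    #(step G lam P t) ≤ lam := by
  rcases t with e | ⟨v, i⟩
  · exact (mk_le_one_iff_set_subsingleton.2 (edgeStep_subsingleton P e)).trans
      (Cardinal.one_le_iff_ne_zero.2 hlam)
  · change #(vertexStep G lam P v i) ≤ lam
    unfold vertexStep
    split_ifs with hc
    · exact mk_image_le.trans (le_add_self.trans_eq hc.choose_spec.2)
    · simp

theorem mem_step_of_ne {P : Set (Sym2 V × ι)} {t : Sym2 V ⊕ V × ι} {v w : V} {i : ι}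
    (ht : t ≠ Sum.inr (v, i)) (h : (s(v, w), i) ∈ step G lam P t) :
    (colorGraph P i).neighborSet v = ∅ ∧ ∀ w', (s(v, w'), i) ∈ step G lam P t → w' = w := by
  rcases t with e | ⟨u, j⟩
  · obtain ⟨rfl, -, -, hi⟩ := mem_edgeStep h
    refine ⟨neighborSet_colorGraph_eq_empty_of_notMem_image hi v, fun w' h' => ?_⟩
    exact Sym2.congr_right.1 (Prod.mk.inj (edgeStep_subsingleton P _ h' h)).1
  · obtain ⟨rfl, x, hx, hvw⟩ := mem_vertexStep h
    have hu : u ≠ v := fun hu => ht (by rw [hu])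
    have hends : ∀ {w' y : V}, s(v, w') = s(u, y) → v = y ∧ w' = u := fun h => by
      rcases Sym2.eq_iff.1 h with ⟨h1, -⟩ | h1
      · exact absurd h1.symm hu
      · exact h1
    obtain ⟨rfl, rfl⟩ := hends hvw
    refine ⟨neighborSet_colorGraph_eq_empty_of_notMem_touched hx.2 _, fun w' h' => ?_⟩
    obtain ⟨-, y, -, hy⟩ := mem_vertexStep h'
    exact (hends hy).2

section Transfinite

variable {O : Type u} [LinearOrder O] [WellFoundedLT O]

variable (G lam) in
noncomputable def added (σ : O → Sym2 V ⊕ V × ι) : O → Set (Sym2 V × ι) :=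
  (wellFounded_lt (α := O)).fix fun o ih => step G lam (⋃ o' : Iio o, ih o' o'.2) (σ o)

variable (G lam) in
noncomputable def before (σ : O → Sym2 V ⊕ V × ι) (o : O) : Set (Sym2 V × ι) :=
  ⋃ o' : Iio o, added G lam σ o'

variable (G lam) in
noncomputable def coloring (σ : O → Sym2 V ⊕ V × ι) : Set (Sym2 V × ι) :=
  ⋃ o, added G lam σ o

variable {σ : O → Sym2 V ⊕ V × ι}

theorem added_eq (o : O) : added G lam σ o = step G lam (before G lam σ o) (σ o) := by
  rw [added, WellFounded.fix_eq]
  rfl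

theorem mem_before {o : O} {p : Sym2 V × ι} :
    p ∈ before G lam σ o ↔ ∃ o' < o, p ∈ added G lam σ o' := by
  simp [before]

theorem added_subset_before {o' o : O} (h : o' < o) : added G lam σ o' ⊆ before G lam σ o :=
  fun _ hp => mem_before.2 ⟨o', h, hp⟩

theorem added_subset_coloring (o : O) : added G lam σ o ⊆ coloring G lam σ :=
  subset_iUnion (added G lam σ) o

theorem before_subset_coloring (o : O) : before G lam σ o ⊆ coloring G lam σ :=
  iUnion_subset fun o' => added_subset_coloring o'.1

theorem mk_before_lt {κ : Cardinal.{u}} (hκ : ℵ₀ ≤ κ) (hlam : lam ≠ 0) (hlt : lam < κ)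
    (hO : ∀ o : O, #(Iio o) < κ) (o : O) : #(before G lam σ o) < κ :=
  calc #(before G lam σ o) ≤ #(Iio o) * ⨆ o' : Iio o, #(added G lam σ o') := mk_iUnion_le _
    _ ≤ #(Iio o) * lam :=
        mul_le_mul' le_rfl (ciSup_le' fun o' => by rw [added_eq]; exact mk_step_le hlam _ _)
    _ < κ := mul_lt_of_lt hκ (hO o) hlt

theorem fst_mem_edgeSet_of_mem_coloring {p : Sym2 V × ι} (hp : p ∈ coloring G lam σ) :
    p.1 ∈ G.edgeSet := by
  obtain ⟨o, hp⟩ := mem_iUnion.1 hp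
  rw [added_eq] at hp
  exact fst_mem_edgeSet_of_mem_step hp

theorem eq_of_mem_coloring {e : Sym2 V} {i j : ι} (hi : (e, i) ∈ coloring G lam σ)
    (hj : (e, j) ∈ coloring G lam σ) : i = j := by
  obtain ⟨o₁, h₁⟩ := mem_iUnion.1 hi
  obtain ⟨o₂, h₂⟩ := mem_iUnion.1 hj
  rcases lt_trichotomy o₁ o₂ with h | rfl | h
  · rw [added_eq] at h₂
    exact absurd (added_subset_before h h₁) (isUncolored_of_mem_step h₂ i)
  · rw [added_eq] at h₁ h₂
    exact eq_of_mem_step h₁ h₂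
  · rw [added_eq] at h₁
    exact absurd (added_subset_before h h₂) (isUncolored_of_mem_step h₁ j)

theorem exists_mem_coloring {κ : Cardinal.{u}} (hκ : ℵ₀ ≤ κ) (hlam : lam ≠ 0) (hlt : lam < κ)
    (hO : ∀ o : O, #(Iio o) < κ) (hι : κ ≤ #ι) (hσ : σ.Surjective) {e : Sym2 V}
    (he : e ∈ G.edgeSet) : ∃ i, (e, i) ∈ coloring G lam σ := by
  obtain ⟨o, ho⟩ := hσ (Sum.inl e)
  by_cases hun : IsUncolored (before G lam σ o) e
  · have hfresh : ∃ i, i ∉ Prod.snd '' before G lam σ o := compl_nonempty_of_mk_lt_mk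
      (mk_image_le.trans_lt ((mk_before_lt hκ hlam hlt hO o).trans_le hι))
    obtain ⟨⟨e', i⟩, hp⟩ := edgeStep_nonempty he hun hfresh
    obtain ⟨rfl, -⟩ := mem_edgeStep hp
    refine ⟨i, added_subset_coloring o ?_⟩
    rw [added_eq, ho]
    exact hp
  · simp only [IsUncolored, not_forall, not_not] at hun
    obtain ⟨i, hi⟩ := hun
    exact ⟨i, before_subset_coloring o hi⟩

theorem notMem_added_of_lt {v w w' : V} {i : ι} {o₁ o₂ : O}
    (h₁ : (s(v, w), i) ∈ added G lam σ o₁) (hvw : v ≠ w) (h : o₁ < o₂)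
    (hσ : σ o₂ ≠ Sum.inr (v, i)) : (s(v, w'), i) ∉ added G lam σ o₂ := by
  intro h₂
  rw [added_eq] at h₂
  have hw : w ∈ (colorGraph (before G lam σ o₂) i).neighborSet v :=
    mem_neighborSet_colorGraph.2 ⟨added_subset_before h h₁, hvw⟩
  rw [(mem_step_of_ne hσ h₂).1] at hw
  exact hw

theorem subsingleton_neighborSet_before {v : V} {i : ι} {o : O}
    (hσ : ∀ o' < o, σ o' ≠ Sum.inr (v, i)) :
    ((colorGraph (before G lam σ o) i).neighborSet v).Subsingleton := by
  intro w₁ hw₁ w₂ hw₂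
  obtain ⟨hp₁, hvw₁⟩ := mem_neighborSet_colorGraph.1 hw₁
  obtain ⟨hp₂, hvw₂⟩ := mem_neighborSet_colorGraph.1 hw₂
  obtain ⟨o₁, ho₁, h₁⟩ := mem_before.1 hp₁
  obtain ⟨o₂, ho₂, h₂⟩ := mem_before.1 hp₂
  rcases lt_trichotomy o₁ o₂ with h | rfl | h
  · exact absurd h₂ (notMem_added_of_lt h₁ hvw₁ h (hσ o₂ ho₂))
  · rw [added_eq] at h₁ h₂
    exact ((mem_step_of_ne (hσ o₁ ho₁) h₁).2 w₂ h₂).symm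
  · exact absurd h₁ (notMem_added_of_lt h₂ hvw₂ h (hσ o₁ ho₁))

theorem mk_neighborSet_before_union_added {κ : Cardinal.{u}} (hκ : ℵ₀ ≤ κ) (hlam : lam ≠ 0)
    (hlt : lam < κ) (hO : ∀ o : O, #(Iio o) < κ) (hσ : σ.Injective) {v : V} {i : ι}
    (hdeg : #(G.neighborSet v) = κ) {o₀ : O} (ho₀ : σ o₀ = Sum.inr (v, i)) :
    #((colorGraph (before G lam σ o₀ ∪ added G lam σ o₀) i).neighborSet v) = lam := by
  set P := before G lam σ o₀
  have hN : #((colorGraph P i).neighborSet v) ≤ lam :=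
    (mk_le_one_iff_set_subsingleton.2 (subsingleton_neighborSet_before fun o' h' hσo' =>
      h'.ne (hσ (hσo'.trans ho₀.symm)))).trans (Cardinal.one_le_iff_ne_zero.2 hlam)
  have hcand : lam ≤ #(G.neighborSet v \ touched P : Set V) :=
    hlt.le.trans <| le_mk_sdiff_of_mk_lt hκ hdeg.ge <|
      mk_touched_lt hκ (mk_before_lt hκ hlam hlt hO o₀)
  obtain ⟨W, hW, hcard, hstep⟩ := exists_vertexStep_eq_image hN hcand
  have hadded : added G lam σ o₀ = (fun w => (s(v, w), i)) '' W := by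
    rw [added_eq, ho₀]
    exact hstep
  have hsplit : (colorGraph (P ∪ added G lam σ o₀) i).neighborSet v =
      (colorGraph P i).neighborSet v ∪ W := by
    ext w
    simp only [mem_union, mem_neighborSet_colorGraph, hadded, mem_image, Prod.mk.injEq,
      Sym2.congr_right, and_true, exists_eq_right]
    constructor
    · rintro ⟨h | h, hvw⟩
      exacts [Or.inl ⟨h, hvw⟩, Or.inr h]
    · rintro (⟨h, hvw⟩ | h)
      exacts [⟨Or.inl h, hvw⟩, ⟨Or.inr h, G.ne_of_adj (hW h).1⟩]
  have hdisj : Disjoint ((colorGraph P i).neighborSet v) W :=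
    disjoint_left.2 fun w hw hwW =>
      isUncolored_of_notMem_touched v (hW hwW).2 i (mem_neighborSet_colorGraph.1 hw).1
  rw [hsplit, mk_union_of_disjoint hdisj, hcard]

theorem neighborSet_coloring_eq {v : V} {i : ι} {o₀ : O} (hσ : σ.Injective)
    (ho₀ : σ o₀ = Sum.inr (v, i))
    (hne : ((colorGraph (before G lam σ o₀ ∪ added G lam σ o₀) i).neighborSet v).Nonempty) :
    (colorGraph (coloring G lam σ) i).neighborSet v =
      (colorGraph (before G lam σ o₀ ∪ added G lam σ o₀) i).neighborSet v := by
  refine Subset.antisymm (fun w hw => ?_) (neighborSet_colorGraph_mono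
    (union_subset (before_subset_coloring o₀) (added_subset_coloring o₀)) i v)
  obtain ⟨hp, hvw⟩ := mem_neighborSet_colorGraph.1 hw
  obtain ⟨o, ho⟩ := mem_iUnion.1 hp
  refine mem_neighborSet_colorGraph.2 ⟨?_, hvw⟩
  rcases lt_trichotomy o o₀ with h | rfl | h
  · exact Or.inl (added_subset_before h ho)
  · exact Or.inr ho
  · obtain ⟨w', hw'⟩ := hne
    obtain ⟨hp', hvw'⟩ := mem_neighborSet_colorGraph.1 hw'
    obtain ⟨o', ho', h'⟩ : ∃ o' ≤ o₀, (s(v, w'), i) ∈ added G lam σ o' := by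
      rcases hp' with hp' | hp'
      · obtain ⟨o', h1, h2⟩ := mem_before.1 hp'
        exact ⟨o', h1.le, h2⟩
      · exact ⟨o₀, le_rfl, hp'⟩
    have hσo : σ o ≠ Sum.inr (v, i) := fun h'' => h.ne' (hσ (h''.trans ho₀.symm))
    exact absurd ho (notMem_added_of_lt h' hvw' (ho'.trans_lt h) hσo)

theorem cardRegular_colorGraph_coloring {κ : Cardinal.{u}} (hκ : ℵ₀ ≤ κ) (hlam : lam ≠ 0)
    (hlt : lam < κ) (hO : ∀ o : O, #(Iio o) < κ) (hσ : σ.Bijective) (hreg : G.CardRegular κ)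
    (i : ι) : (colorGraph (coloring G lam σ) i).CardRegular lam := by
  intro v
  obtain ⟨o₀, ho₀⟩ := hσ.2 (Sum.inr (v, i))
  have hcard := mk_neighborSet_before_union_added hκ hlam hlt hO hσ.1 (hreg v) ho₀
  rw [neighborSet_coloring_eq hσ.1 ho₀ (mk_set_ne_zero_iff.1 (hcard.trans_ne hlam)), hcard]

end Transfinite

theorem exists_factorization_of_lt {κ lam : Cardinal.{u}} (hκ : ℵ₀ ≤ κ) (hlam : lam ≠ 0)
    (hlt : lam < κ) (G : SimpleGraph V) (hV : #V ≤ κ) (hreg : G.CardRegular κ) :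
    ∃ (ι : Type u) (F : ι → SimpleGraph V), G.IsFactorization F ∧
      ∀ i, (F i).CardRegular lam := by
  let ι := κ.out
  have hι : #ι = κ := mk_out κ
  let T := Sym2 V ⊕ V × ι
  have hT : #T ≤ κ :=
    calc #T ≤ #(V × V) + #(V × ι) := by
          rw [mk_sum, lift_id, lift_id]
          exact add_le_add_left (mk_le_of_surjective Sym2.mk_surjective) _
      _ ≤ κ * κ + κ * κ := by
          rw [mk_prod, mk_prod, lift_id, lift_id, hι]
          gcongr
      _ = κ := by rw [mul_eq_self hκ, add_eq_self hκ]
  let O := (#T).ord.ToType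
  obtain ⟨σ⟩ : Nonempty (O ≃ T) := Cardinal.eq.1 (mk_ord_toType _)
  have hO : ∀ o : O, #(Iio o) < κ := fun o =>
    (mk_Iio_lt o (by simp [O])).trans_le ((mk_ord_toType _).trans_le hT)
  exact ⟨ι, colorGraph (coloring G lam σ),
    isFactorization_colorGraph (fun _ => fst_mem_edgeSet_of_mem_coloring)
      (fun _ _ _ => eq_of_mem_coloring)
      (fun _ => exists_mem_coloring hκ hlam hlt hO hι.ge σ.surjective),
    cardRegular_colorGraph_coloring hκ hlam hlt hO σ.bijective hreg⟩

end RegularFactorization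

/-- Every connected `κ`-regular graph has a `λ`-factorization for every nonzero `λ ≤ κ`. -/
theorem stmt_6 (κ lam : Cardinal.{u}) (hκ : ℵ₀ ≤ κ) (hlam0 : lam ≠ 0) (hlamκ : lam ≤ κ)
    {V : Type u} (G : SimpleGraph V) (hconn : G.Connected) (hreg : G.CardRegular κ) :
    ∃ (ι : Type u) (F : ι → SimpleGraph V), G.IsFactorization F ∧
      ∀ i, (F i).CardRegular lam := by
  rcases hlamκ.eq_or_lt with rfl | hlt
  · exact ⟨PUnit, fun _ => G,
      ⟨fun _ => le_rfl, fun i j hij => (hij (Subsingleton.elim i j)).elim, iUnion_const _⟩,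
      fun _ => hreg⟩
  · exact RegularFactorization.exists_factorization_of_lt hκ hlam0 hlt G
      (hconn.mk_le_s6 hκ fun v => (hreg v).le) hreg
end

section
/- Let κ be an infinite cardinal, and let T be a forest without isolated vertices having exactly κ components, each of order at most κ. Then T embeds as a spanning subgraph of the κ-regular tree. -/
open Cardinal

universe u

/-
Compare both graphs with the word tree over an alphabet `K` of size `κ`, in which `l` is adjacent
to `k :: l`. Rooted anywhere, the `κ`-regular tree gives every vertex exactly `κ` children, so
indexing children by `K` identifies it with the word tree. The forest is laid out in the word tree
level by level: if the word `l` carries the vertex `w`, the words `inl z :: l` carry the children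
`z` of `w`, and the `κ` words of each level left over receive the roots of new components. As
`Option (ℕ × W)` has size `κ`, enumerating the components by it uses every word exactly once, and
each edge of the forest, joining a vertex to a child, lands on an edge of the word tree.
-/

namespace SimpleGraph

variable {V : Type*} {H : SimpleGraph V}

lemma Reachable.exists_adj_dist_add_one {x a : V} (hr : H.Reachable x a) (hd : 0 < H.dist x a) :
    ∃ u, H.Adj u a ∧ H.dist x u + 1 = H.dist x a := by
  obtain ⟨p, -, hp⟩ := hr.exists_path_of_dist
  have hnil : ¬ p.Nil := fun h => by rw [← hp, h.length_eq_zero] at hd; exact hd.false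
  have hadj := p.adj_penultimate hnil
  refine ⟨p.penultimate, hadj, le_antisymm ?_ ?_⟩
  · have := dist_le p.dropLast
    rw [Walk.length_dropLast] at this
    omega
  · simpa [dist_eq_one_iff_adj.mpr hadj] using hadj.reachable.dist_triangle_right x

lemma IsAcyclic.eq_of_adj_of_dist_add_one (hG : H.IsAcyclic) {x a u₁ u₂ : V}
    (hr : H.Reachable x a) (h₁ : H.Adj u₁ a) (h₂ : H.Adj u₂ a)
    (d₁ : H.dist x u₁ + 1 = H.dist x a) (d₂ : H.dist x u₂ + 1 = H.dist x a) : u₁ = u₂ := by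
  obtain ⟨p, hp, hpl⟩ := hr.exists_path_of_dist
  suffices h : ∀ u, H.Adj u a → H.dist x u + 1 = H.dist x a → u = p.penultimate from
    (h _ h₁ d₁).trans (h _ h₂ d₂).symm
  intro u hu du
  refine hG.eq_penultimate_of_adj_end hp hu.symm (by_contra fun hup => ?_)
  -- otherwise `p` followed by the edge `a u` is the path from `x` to `u`, too long by two
  obtain ⟨q, hq, hql⟩ := (hr.trans hu.symm.reachable).exists_path_of_dist
  have hpq := congrArg (fun r : H.Path x u => r.1.length)
    ((hG.subsingleton_path x u).elim ⟨_, hp.concat hup hu.symm⟩ ⟨q, hq⟩)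
  simp only [Walk.length_concat] at hpq
  omega

-- Choosing a root in each component makes every graph a rooted forest.
noncomputable def compRoot (H : SimpleGraph V) (v : V) : V := (H.connectedComponentMk v).out

lemma reachable_compRoot (v : V) : H.Reachable (H.compRoot v) v :=
  ConnectedComponent.exact (Quot.out_eq _)

lemma compRoot_eq_of_reachable {u v : V} (h : H.Reachable u v) : H.compRoot u = H.compRoot v := by
  rw [compRoot, compRoot, ConnectedComponent.eq.mpr h]

lemma compRoot_compRoot (v : V) : H.compRoot (H.compRoot v) = H.compRoot v :=
  compRoot_eq_of_reachable (reachable_compRoot v)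

noncomputable def depth (H : SimpleGraph V) (v : V) : ℕ := H.dist (H.compRoot v) v

lemma depth_eq_zero_iff {v : V} : H.depth v = 0 ↔ H.compRoot v = v :=
  (reachable_compRoot v).dist_eq_zero_iff

def IsParentOf (H : SimpleGraph V) (u v : V) : Prop := H.Adj u v ∧ H.depth v = H.depth u + 1

lemma IsParentOf.depth_pos {u v : V} (h : H.IsParentOf u v) : 0 < H.depth v := by
  rw [h.2]; exact Nat.succ_pos _

lemma IsParentOf.dist_compRoot_add_one {u v : V} (h : H.IsParentOf u v) :
    H.dist (H.compRoot v) u + 1 = H.dist (H.compRoot v) v := by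
  simpa only [depth, compRoot_eq_of_reachable h.1.reachable] using h.2.symm

lemma exists_isParentOf {v : V} (h : 0 < H.depth v) : ∃ u, H.IsParentOf u v := by
  obtain ⟨u, hu, hd⟩ := (reachable_compRoot v).exists_adj_dist_add_one h
  refine ⟨u, hu, ?_⟩
  rw [depth, depth, compRoot_eq_of_reachable hu.reachable, hd]

lemma IsAcyclic.isParentOf_unique (hG : H.IsAcyclic) {u₁ u₂ v : V} (h₁ : H.IsParentOf u₁ v)
    (h₂ : H.IsParentOf u₂ v) : u₁ = u₂ :=
  hG.eq_of_adj_of_dist_add_one (reachable_compRoot v) h₁.1 h₂.1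
    h₁.dist_compRoot_add_one h₂.dist_compRoot_add_one

lemma IsAcyclic.isParentOf_or_isParentOf (hG : H.IsAcyclic) {u v : V} (h : H.Adj u v) :
    H.IsParentOf u v ∨ H.IsParentOf v u := by
  have hroot := compRoot_eq_of_reachable h.reachable
  rcases hG.dist_eq_dist_add_one_of_adj_of_reachable (H.compRoot u) h (reachable_compRoot u)
    with huv | hvu
  · exact .inr ⟨h.symm, huv.trans (by rw [depth, hroot])⟩
  · exact .inl ⟨h, by rw [depth, ← hroot, hvu]; rfl⟩

open scoped Classical in
/-- The parent of `v`, or `v` itself if `v` is a root. -/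
noncomputable def parent (H : SimpleGraph V) (v : V) : V :=
  if h : ∃ u, H.IsParentOf u v then h.choose else v

lemma isParentOf_parent_or_eq (v : V) : H.IsParentOf (H.parent v) v ∨ H.parent v = v := by
  unfold parent
  split_ifs with h
  exacts [.inl h.choose_spec, .inr rfl]

lemma isParentOf_parent {v : V} (h : 0 < H.depth v) : H.IsParentOf (H.parent v) v := by
  rw [parent, dif_pos (exists_isParentOf h)]
  exact (exists_isParentOf h).choose_spec

lemma depth_parent_lt {v : V} (h : 0 < H.depth v) : H.depth (H.parent v) < H.depth v := by
  rw [(isParentOf_parent h).2]; exact Nat.lt_succ_self _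

lemma IsAcyclic.parent_eq (hG : H.IsAcyclic) {u v : V} (h : H.IsParentOf u v) : H.parent v = u :=
  hG.isParentOf_unique (isParentOf_parent h.depth_pos) h

lemma IsAcyclic.setOf_isParentOf (hG : H.IsAcyclic) (v : V) :
    {z | H.IsParentOf v z} = H.neighborSet v \ {H.parent v} := by
  ext z
  simp only [Set.mem_ofPred_eq, Set.mem_sdiff, mem_neighborSet, Set.mem_singleton_iff]
  refine ⟨fun h => ⟨h.1, fun hz => ?_⟩, fun ⟨hadj, hz⟩ => ?_⟩
  · rcases isParentOf_parent_or_eq (H := H) v with hp | hp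
    · have := h.2; rw [hz, hp.2] at this; omega
    · exact h.1.ne (hz.trans hp).symm
  · exact (hG.isParentOf_or_isParentOf hadj).resolve_right fun h' => hz (hG.parent_eq h').symm

end SimpleGraph

open SimpleGraph

lemma Cardinal.mk_diff_singleton_of_aleph0_le {α : Type*} {s : Set α} (hs : ℵ₀ ≤ #s) (a : α) :
    #(s \ {a} : Set α) = #s := by
  refine le_antisymm (mk_le_mk_of_subset Set.sdiff_subset) ?_
  have hle := le_mk_sdiff_add_mk s {a}
  rw [mk_singleton] at hle
  have hinf : ℵ₀ ≤ #(s \ {a} : Set α) := by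
    by_contra! hfin
    exact (hs.trans hle).not_gt (add_lt_aleph0 hfin one_lt_aleph0)
  rwa [add_one_eq hinf] at hle

lemma SimpleGraph.exists_le_iso_of_bijective_hom {W V : Type*} {T : SimpleGraph W}
    {G : SimpleGraph V} (f : T →g G) (hf : Function.Bijective f) :
    ∃ F : SimpleGraph V, F ≤ G ∧ Nonempty (T ≃g F) :=
  ⟨T.map (Equiv.ofBijective f hf).toEmbedding,
    (map_le_iff_le_comap _ _ _).2 fun _ _ h => f.map_adj h, ⟨Iso.map _ T⟩⟩

/-- For infinite `K`, the `#K`-regular tree. -/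
def wordTree (K : Type*) : SimpleGraph (List K) := SimpleGraph.fromRel fun l m => ∃ k, m = k :: l

lemma wordTree_adj_cons {K : Type*} (k : K) (l : List K) : (wordTree K).Adj l (k :: l) :=
  ⟨(List.cons_ne_self k l).symm, .inl ⟨k, rfl⟩⟩

section TreeSide

variable {V K : Type u} {G : SimpleGraph V}

def descend (β : ∀ v, K ≃ {z // G.IsParentOf v z}) (r : V) : List K → V
  | [] => r
  | k :: l => β (descend β r l) k

variable (β : ∀ v, K ≃ {z // G.IsParentOf v z}) (r : V)

lemma isParentOf_descend_cons (k : K) (l : List K) :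
    G.IsParentOf (descend β r l) (descend β r (k :: l)) :=
  (β _ k).2

lemma depth_descend (l : List K) : G.depth (descend β r l) = G.depth r + l.length := by
  induction l with
  | nil => rfl
  | cons k l ih => rw [(isParentOf_descend_cons β r k l).2, ih, List.length_cons, add_assoc]

lemma descend_injective (hG : G.IsAcyclic) : Function.Injective (descend β r) := by
  intro l
  induction l with
  | nil =>
    intro m h
    have := depth_descend β r m
    rw [← h] at this
    exact (List.length_eq_zero_iff.mp (by simpa [descend] using this)).symm
  | cons k l ih =>
    rintro (_ | ⟨j, m⟩) h
    · have := depth_descend β r (k :: l)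
      rw [h] at this
      simp [descend] at this
    · have hlm : l = m := ih <| by
        rw [← hG.parent_eq (isParentOf_descend_cons β r k l), h,
          hG.parent_eq (isParentOf_descend_cons β r j m)]
      subst hlm
      exact congrArg (· :: l) ((β _).injective (Subtype.ext h))

lemma descend_surjective (hG : G.Preconnected) (hr : G.depth r = 0) :
    Function.Surjective (descend β r) := by
  suffices h : ∀ n v, G.depth v = n → ∃ l, descend β r l = v from fun v => h _ v rfl
  intro n
  induction n with
  | zero =>
    intro v hv
    refine ⟨[], ?_⟩
    rw [descend, ← depth_eq_zero_iff.mp hr, ← depth_eq_zero_iff.mp hv]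
    exact compRoot_eq_of_reachable (hG r v)
  | succ n ih =>
    intro v hv
    have hpar := isParentOf_parent (H := G) (v := v) (by omega)
    obtain ⟨l, hl⟩ := ih (G.parent v) (by rw [hpar.2] at hv; omega)
    refine ⟨(β (descend β r l)).symm ⟨v, hl ▸ hpar⟩ :: l, ?_⟩
    rw [descend, Equiv.apply_symm_apply]

theorem exists_bijective_hom_wordTree_of_cardRegular {κ : Cardinal} (hκ : ℵ₀ ≤ κ)
    (hG : G.IsTree) (hreg : G.CardRegular κ) (hK : #K = κ) :
    ∃ f : wordTree K →g G, Function.Bijective f := by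
  have hchildren : ∀ v, Nonempty (K ≃ {z // G.IsParentOf v z}) := fun v => by
    rw [← Cardinal.eq, ← Set.coe_ofPred, hG.isAcyclic.setOf_isParentOf, hK,
      mk_diff_singleton_of_aleph0_le (hreg v ▸ hκ), hreg v]
  let β v := (hchildren v).some
  obtain ⟨v₀⟩ := hG.connected.nonempty
  have hroot : G.depth (G.compRoot v₀) = 0 := depth_eq_zero_iff.mpr (compRoot_compRoot v₀)
  refine ⟨⟨descend β (G.compRoot v₀), ?_⟩, descend_injective β _ hG.isAcyclic,
    descend_surjective β _ hG.connected.preconnected hroot⟩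
  rintro l m ⟨-, ⟨k, rfl⟩ | ⟨k, rfl⟩⟩
  exacts [(isParentOf_descend_cons β _ k l).1, (isParentOf_descend_cons β _ k m).1.symm]

end TreeSide

section ForestSide

variable {W : Type u} {T : SimpleGraph W}

variable (T) in
/-- The words of length `n + 1` not taken by a child of the vertex placed (by `f`) at their tail;
they receive the roots of the components. -/
def freshWords (f : List (W ⊕ W) → W) (n : ℕ) : Set (List (W ⊕ W)) :=
  {m | m.length = n + 1 ∧ ∀ z l, m = Sum.inl z :: l → ¬ T.IsParentOf (f l) z}

lemma mk_freshWords [Infinite W] (f : List (W ⊕ W) → W) (n : ℕ) :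
    #(freshWords T f n) = #W := by
  refine le_antisymm ?_ ?_
  · calc #(freshWords T f n) ≤ #(List (W ⊕ W)) := mk_set_le _
      _ = #W := by rw [mk_list_eq_mk, mk_sum, lift_id, add_eq_self (aleph0_le_mk W)]
  · refine mk_le_of_injective (f := fun x => ⟨List.replicate (n + 1) (Sum.inr x), ?_⟩) ?_
    · exact ⟨List.length_replicate, by simp [List.replicate_succ]⟩
    · intro x y h
      simpa [List.replicate_succ] using congrArg (fun m => m.1.head?) h

variable [Infinite W]

variable (T) in
noncomputable def freshWordsEquiv (f : List (W ⊕ W) → W) (n : ℕ) : freshWords T f n ≃ W :=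
  Classical.choice (Cardinal.eq.mp (mk_freshWords f n))

variable (e : Option (ULift.{u} ℕ × W) ≃ T.ConnectedComponent)

open scoped Classical in
noncomputable def extendLabel (f : List (W ⊕ W) → W) (n : ℕ) (m : List (W ⊕ W)) : W :=
  if h : m ∈ freshWords T f n then (e (some (⟨n⟩, freshWordsEquiv T f n ⟨m, h⟩))).out
  else
    match m with
    | Sum.inl z :: _ => z
    | _ => (e none).out

/-- `wordLabel e n l` is the vertex placed at the word `l` of length `n`: the root of the
component `e none` at `[]`, the root of `e (some (n, x))` at the `x`-th fresh word of length
`n + 1`, and a child `z` of the vertex at `l` at the word `inl z :: l`. -/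
noncomputable def wordLabel : ℕ → List (W ⊕ W) → W
  | 0 => fun _ => (e none).out
  | n + 1 => extendLabel e (wordLabel n) n

noncomputable def wordVertex (l : List (W ⊕ W)) : W := wordLabel e l.length l

lemma wordLabel_eq_wordVertex {n : ℕ} {l : List (W ⊕ W)} (h : l.length = n) :
    wordLabel e n l = wordVertex e l := by
  subst h; rfl

lemma wordVertex_of_mem_freshWords {n : ℕ} {m : List (W ⊕ W)}
    (h : m ∈ freshWords T (wordLabel e n) n) :
    wordVertex e m = (e (some (⟨n⟩, freshWordsEquiv T (wordLabel e n) n ⟨m, h⟩))).out := by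
  rw [← wordLabel_eq_wordVertex e h.1, wordLabel, extendLabel, dif_pos h]

lemma wordVertex_cons_of_isParentOf {z : W} {l : List (W ⊕ W)}
    (h : T.IsParentOf (wordVertex e l) z) : wordVertex e (Sum.inl z :: l) = z := by
  have hfresh : Sum.inl z :: l ∉ freshWords T (wordLabel e l.length) l.length :=
    fun hm => hm.2 z l rfl (by rwa [wordLabel_eq_wordVertex e rfl])
  rw [wordVertex, List.length_cons, wordLabel, extendLabel, dif_neg hfresh]

noncomputable def rootWord (c : T.ConnectedComponent) : List (W ⊕ W) :=
  (e.symm c).elim [] fun p => (freshWordsEquiv T (wordLabel e p.1.down) p.1.down).symm p.2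

lemma wordVertex_rootWord (c : T.ConnectedComponent) : wordVertex e (rootWord e c) = c.out := by
  rcases hc : e.symm c with _ | ⟨⟨n⟩, x⟩
  · rw [rootWord, hc, Option.elim_none, ← e.apply_symm_apply c, hc]
    rfl
  · set m := (freshWordsEquiv T (wordLabel e n) n).symm x
    rw [rootWord, hc, Option.elim_some, wordVertex_of_mem_freshWords e m.2, Subtype.coe_eta,
      Equiv.apply_symm_apply, ← hc, Equiv.apply_symm_apply]

noncomputable def vertexWord (w : W) : List (W ⊕ W) :=
  if _ : 0 < T.depth w then Sum.inl w :: vertexWord (T.parent w)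
  else rootWord e (T.connectedComponentMk w)
termination_by T.depth w
decreasing_by exact depth_parent_lt ‹_›

lemma vertexWord_out (c : T.ConnectedComponent) : vertexWord e c.out = rootWord e c := by
  have hmk : T.connectedComponentMk c.out = c := c.out_eq
  have hroot : T.compRoot c.out = c.out := by rw [compRoot, hmk]
  rw [vertexWord, dif_neg (by rw [depth_eq_zero_iff.mpr hroot]; exact Nat.lt_irrefl 0), hmk]

lemma vertexWord_of_isParentOf (hT : T.IsAcyclic) {u z : W} (h : T.IsParentOf u z) :
    vertexWord e z = Sum.inl z :: vertexWord e u := by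
  rw [vertexWord, dif_pos h.depth_pos, hT.parent_eq h]

lemma wordVertex_vertexWord (hT : T.IsAcyclic) (w : W) : wordVertex e (vertexWord e w) = w := by
  suffices h : ∀ n w, T.depth w = n → wordVertex e (vertexWord e w) = w from h _ w rfl
  intro n
  induction n with
  | zero =>
    intro w hw
    rw [← depth_eq_zero_iff.mp hw, compRoot, vertexWord_out, wordVertex_rootWord]
  | succ n ih =>
    intro w hw
    have hpar := isParentOf_parent (H := T) (v := w) (by omega)
    have hvert := ih (T.parent w) (by rw [hpar.2] at hw; omega)
    rw [vertexWord_of_isParentOf e hT hpar, wordVertex_cons_of_isParentOf e (by rwa [hvert])]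

lemma vertexWord_wordVertex (hT : T.IsAcyclic) (l : List (W ⊕ W)) :
    vertexWord e (wordVertex e l) = l := by
  induction l with
  | nil =>
    rw [show wordVertex e [] = (e none).out from rfl, vertexWord_out, rootWord,
      Equiv.symm_apply_apply, Option.elim_none]
  | cons k l ih =>
    by_cases hfresh : k :: l ∈ freshWords T (wordLabel e l.length) l.length
    · rw [wordVertex_of_mem_freshWords e hfresh, vertexWord_out, rootWord,
        Equiv.symm_apply_apply, Option.elim_some, Equiv.symm_apply_apply]
    · obtain ⟨z, l', hkl, hz⟩ : ∃ z l', k :: l = Sum.inl z :: l' ∧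
          T.IsParentOf (wordLabel e l.length l') z := by
        simpa [freshWords] using hfresh
      obtain ⟨rfl, rfl⟩ := List.cons.inj hkl
      rw [wordLabel_eq_wordVertex e rfl] at hz
      rw [wordVertex_cons_of_isParentOf e hz, vertexWord_of_isParentOf e hT hz, ih]

theorem exists_bijective_hom_wordTree (hT : T.IsAcyclic) (hc : #T.ConnectedComponent = #W) :
    ∃ f : T →g wordTree (W ⊕ W), Function.Bijective f := by
  obtain ⟨e⟩ : Nonempty (Option (ULift.{u} ℕ × W) ≃ T.ConnectedComponent) := by
    simp only [← Cardinal.eq, hc, mk_option, mk_prod, mk_uLift, mk_nat, lift_aleph0, lift_id]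
    rw [aleph0_mul_eq (aleph0_le_mk W), add_one_eq (aleph0_le_mk W)]
  refine ⟨⟨vertexWord e, fun {a b} h => ?_⟩,
    Function.bijective_iff_has_inverse.mpr ⟨wordVertex e,
      wordVertex_vertexWord e hT, vertexWord_wordVertex e hT⟩⟩
  rcases hT.isParentOf_or_isParentOf h with hab | hba
  · rw [vertexWord_of_isParentOf e hT hab]
    exact wordTree_adj_cons _ _
  · rw [vertexWord_of_isParentOf e hT hba]
    exact (wordTree_adj_cons _ _).symm

end ForestSide

theorem stmt_19_general (κ : Cardinal.{u}) (hκ : ℵ₀ ≤ κ) {W : Type u} (T : SimpleGraph W)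
    (hac : T.IsAcyclic)
    (hcomp : #(T.ConnectedComponent) = κ)
    (hord : ∀ c : T.ConnectedComponent, #c.supp ≤ κ)
    {V : Type u} (G : SimpleGraph V) (htree : G.IsTree) (hreg : G.CardRegular κ) :
    ∃ F : SimpleGraph V, F ≤ G ∧ Nonempty (T ≃g F) := by
  have hW : #W = κ := by
    refine le_antisymm ?_ (hcomp ▸ mk_le_of_surjective Quot.mk_surjective)
    calc #W ≤ #T.ConnectedComponent * κ := mk_le_mk_mul_of_mk_preimage_le _ hord
      _ = κ := by rw [hcomp, mul_eq_self hκ]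
  have : Infinite W := infinite_iff.mpr (hW ▸ hκ)
  obtain ⟨f, hf⟩ := exists_bijective_hom_wordTree hac (hcomp.trans hW.symm)
  obtain ⟨g, hg⟩ := exists_bijective_hom_wordTree_of_cardRegular (K := W ⊕ W) hκ htree hreg
    (by rw [mk_sum, lift_id, hW, add_eq_self hκ])
  exact exists_le_iso_of_bijective_hom (g.comp f) (hg.comp hf)

/-- Every forest without isolated vertices with exactly `κ` components, each of order at
most `κ`, embeds as a spanning subgraph of the `κ`-regular tree. -/
theorem stmt_19 (κ : Cardinal.{u}) (hκ : ℵ₀ ≤ κ) {W : Type u} (T : SimpleGraph W)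
    (hac : T.IsAcyclic) (hni : T.NoIsolatedVerts)
    (hcomp : #(T.ConnectedComponent) = κ)
    (hord : ∀ c : T.ConnectedComponent, #c.supp ≤ κ)
    {V : Type u} (G : SimpleGraph V) (htree : G.IsTree) (hreg : G.CardRegular κ) :
    ∃ F : SimpleGraph V, F ≤ G ∧ Nonempty (T ≃g F) :=
  stmt_19_general κ hκ T hac hcomp hord G htree hreg
end
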